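/- There is a constant C > 0 (depending only on the link) such that for all v ∈ B⁴, z ∈ (0,1), and almost all (s,t), |Jac g_{(v,z)}|(s,t) ≤ C, where g_{(v,z)} is the canonical family Gauss map. -/

import Mathlib

/-!
The Gauss map is the normalisation of the chord `u = F_v x - D(F_v y)`, where `D` is the dilation
by `a` about `c(v)`. Since `F_v` maps the unit sphere onto a sphere centred at `c(v)`,
`‖u‖ ≥ √a ‖F_v x - F_v y‖ = √a ‖x - y‖ / (‖x - v‖ ‖y - v‖) ≥ √a α / (‖x - v‖ ‖y - v‖)`.
Normalisation is `2 / ‖u‖`-Lipschitz at `u`, and `‖F_v x - F_v x₀‖ = ‖x - x₀‖ / (‖x - v‖ ‖x₀ - v‖)`,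
so the two partial derivatives are at most `2 K₁ ‖y - v‖ / (α √a ‖x - v‖)` and
`2 K₂ √a ‖x - v‖ / (α ‖y - v‖)`. Their product bounds the Jacobian, and in it `√a`, `‖x - v‖` and
`‖y - v‖` cancel, leaving `4 K₁ K₂ / α²` whatever `v` and `z` are.
-/

open Real MeasureTheory NormedSpace AffineMap
open scoped RealInnerProductSpace

theorem norm_sub_pos_of_norm_lt_of_norm_eq_one {V : Type*} [NormedAddCommGroup V] {v x : V}
    (hv : ‖v‖ < 1) (hx : ‖x‖ = 1) : 0 < ‖x - v‖ := by
  have := norm_sub_norm_le x v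
  linarith

theorem ne_of_norm_lt_of_norm_eq_one {V : Type*} [NormedAddCommGroup V] {v x : V}
    (hv : ‖v‖ < 1) (hx : ‖x‖ = 1) : x ≠ v :=
  sub_ne_zero.1 (norm_pos_iff.1 (norm_sub_pos_of_norm_lt_of_norm_eq_one hv hx))

/-- The paper's `a(v,z)`. -/
noncomputable def dilationFactor {V : Type*} [NormedAddCommGroup V] (v : V) (z : ℝ) : ℝ :=
  1 + (1 - ‖v‖ ^ 2) * (2 * z - 1) / ((1 - ‖v‖ ^ 2 + z) * (1 - z))

theorem dilationFactor_pos {V : Type*} [NormedAddCommGroup V] {v : V} (hv : ‖v‖ < 1) {z : ℝ}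
    (hz : z ∈ Set.Ioo (0 : ℝ) 1) : 0 < dilationFactor v z := by
  obtain ⟨hz0, hz1⟩ := hz
  have hb : 0 < 1 - ‖v‖ ^ 2 := by nlinarith [norm_nonneg v]
  have hden : 0 < (1 - ‖v‖ ^ 2 + z) * (1 - z) := by nlinarith
  have : dilationFactor v z = z * (1 - ‖v‖ ^ 2 + 1 - z) / ((1 - ‖v‖ ^ 2 + z) * (1 - z)) := by
    rw [dilationFactor]; field_simp; ring
  rw [this]
  exact div_pos (by nlinarith) hden

theorem homothety_sub_homothety {k W : Type*} [CommRing k] [AddCommGroup W] [Module k W]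
    (c P Q : W) (a : k) :
    homothety c a P - homothety c a Q = a • (P - Q) := by
  simp only [homothety_apply, vsub_eq_sub, vadd_eq_add]; module

section

variable {V : Type*} [NormedAddCommGroup V] [NormedSpace ℝ V]

theorem norm_normalize_le_one (x : V) : ‖normalize x‖ ≤ 1 := by
  rcases eq_or_ne x 0 with rfl | hx
  · simp [normalize_zero_eq_zero]
  · exact (norm_normalize hx).le

theorem norm_normalize_sub_normalize_le {x : V} (y : V) (hx : x ≠ 0) :
    ‖normalize x - normalize y‖ ≤ 2 * ‖x - y‖ / ‖x‖ := by
  have hx' : 0 < ‖x‖ := norm_pos_iff.2 hx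
  have key : ‖x‖ • (normalize x - normalize y) = (x - y) + (‖y‖ - ‖x‖) • normalize y := by
    rw [smul_sub, norm_smul_normalize, sub_smul, norm_smul_normalize]; abel
  rw [le_div_iff₀ hx', mul_comm, ← abs_of_pos hx', ← Real.norm_eq_abs, ← norm_smul, key]
  calc ‖(x - y) + (‖y‖ - ‖x‖) • normalize y‖
      ≤ ‖x - y‖ + |‖y‖ - ‖x‖| * ‖normalize y‖ := by
        grw [norm_add_le, norm_smul, Real.norm_eq_abs]
    _ ≤ ‖x - y‖ + ‖x - y‖ * 1 := by
        gcongr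
        · rw [abs_sub_comm]; exact abs_norm_sub_norm_le x y
        · exact norm_normalize_le_one y
    _ = 2 * ‖x - y‖ := by ring

theorem norm_normalize_sub_normalize_le_of_le {x : V} (y : V) {L : ℝ} (hL : 0 < L)
    (hLx : L ≤ ‖x‖) : ‖normalize x - normalize y‖ ≤ 2 * ‖x - y‖ / L := by
  have hx : x ≠ 0 := norm_pos_iff.1 (hL.trans_le hLx)
  exact (norm_normalize_sub_normalize_le y hx).trans (by gcongr)

end

noncomputable section

variable {E : Type*} [NormedAddCommGroup E] [InnerProductSpace ℝ E]

theorem sqrt_mul_norm_sub_le_norm_sub_smul {X Y : E} (h : ‖X‖ = ‖Y‖) {a : ℝ} (ha : 0 ≤ a) :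
    √a * ‖X - Y‖ ≤ ‖X - a • Y‖ := by
  have hsq : a * ‖X - Y‖ ^ 2 ≤ ‖X - a • Y‖ ^ 2 := by
    rw [norm_sub_sq_real, norm_sub_sq_real, real_inner_smul_right, norm_smul, h,
      Real.norm_eq_abs, abs_of_nonneg ha]
    -- the difference of the two sides is `(1 - a)² ‖Y‖²`
    nlinarith [sq_nonneg ((1 - a) * ‖Y‖)]
  rw [← sqrt_sq (norm_nonneg (X - a • Y)), ← sqrt_sq (norm_nonneg (X - Y)), ← sqrt_mul ha]
  exact sqrt_le_sqrt hsq

theorem sqrt_mul_dist_le_dist_homothety {c P Q : E} (h : dist P c = dist Q c) {a : ℝ}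
    (ha : 0 ≤ a) : √a * dist P Q ≤ dist P (homothety c a Q) := by
  simp only [dist_eq_norm] at h ⊢
  have hPQ : P - Q = (P - c) - (Q - c) := by abel
  have hPHQ : P - homothety c a Q = (P - c) - a • (Q - c) := by
    rw [homothety_apply, vsub_eq_sub, vadd_eq_add]; abel
  rw [hPQ, hPHQ]
  exact sqrt_mul_norm_sub_le_norm_sub_smul h ha

theorem sqrt_norm_sq_mul_norm_sq_sub_inner_sq_le (A B : E) :
    √(‖A‖ ^ 2 * ‖B‖ ^ 2 - ⟪A, B⟫ ^ 2) ≤ ‖A‖ * ‖B‖ := by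
  rw [← sqrt_sq (by positivity : 0 ≤ ‖A‖ * ‖B‖)]
  exact sqrt_le_sqrt (by nlinarith [sq_nonneg ⟪A, B⟫])

/-- The paper's `F_v`, i.e. `EuclideanGeometry.inversion v 1 x - v`. -/
def invertAbout (v x : E) : E := (‖x - v‖ ^ 2)⁻¹ • (x - v)

/-- The paper's `c(v)`: `invertAbout v` maps the unit sphere onto a sphere centred here. -/
def unitSphereImageCenter (v : E) : E := (1 - ‖v‖ ^ 2)⁻¹ • v

def imageChord (v : E) (a : ℝ) (x y : E) : E :=
  invertAbout v x - homothety (unitSphereImageCenter v) a (invertAbout v y)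

/-- The paper's `g_{(v,z)}` at `(s, t)` is `gaussMap v (dilationFactor v z) (γ₁ s) (γ₂ t)`. -/
def gaussMap (v : E) (a : ℝ) (x y : E) : E := normalize (imageChord v a x y)

variable {v x y : E} {α a : ℝ}

theorem norm_invertAbout_sub_invertAbout (hx : x ≠ v) (hy : y ≠ v) :
    ‖invertAbout v x - invertAbout v y‖ = ‖x - y‖ / (‖x - v‖ * ‖y - v‖) := by
  have := dist_div_norm_sq_smul (sub_ne_zero.2 hx) (sub_ne_zero.2 hy) 1
  simp only [one_div, inv_pow, one_pow, dist_eq_norm, sub_sub_sub_cancel_right] at this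
  rw [invertAbout, invertAbout, this, div_eq_inv_mul]

theorem norm_invertAbout_sub_unitSphereImageCenter (hv : ‖v‖ < 1) (hx : ‖x‖ = 1) :
    ‖invertAbout v x - unitSphereImageCenter v‖ = (1 - ‖v‖ ^ 2)⁻¹ := by
  have hb : 0 < 1 - ‖v‖ ^ 2 := by nlinarith [norm_nonneg v]
  have hxv := norm_sub_pos_of_norm_lt_of_norm_eq_one hv hx
  have hinner : 2 * ⟪x, v⟫ = 1 + ‖v‖ ^ 2 - ‖x - v‖ ^ 2 := by
    rw [norm_sub_sq_real, hx]; ring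
  have hsq : ‖invertAbout v x - unitSphereImageCenter v‖ ^ 2 = ((1 - ‖v‖ ^ 2)⁻¹) ^ 2 := by
    rw [invertAbout, unitSphereImageCenter, norm_sub_sq_real, real_inner_smul_left,
      real_inner_smul_right, inner_sub_left, real_inner_self_eq_norm_sq, norm_smul, norm_smul]
    simp only [Real.norm_eq_abs, abs_inv, abs_pow, abs_norm, abs_of_pos hb]
    field_simp
    linear_combination (‖v‖ ^ 2 - 1) * hinner
  rwa [sq_eq_sq₀ (norm_nonneg _) (by positivity)] at hsq

theorem sqrt_mul_norm_sub_div_le_norm_imageChord (hv : ‖v‖ < 1) (hx : ‖x‖ = 1) (hy : ‖y‖ = 1)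
    (ha : 0 ≤ a) :
    √a * ‖x - y‖ / (‖x - v‖ * ‖y - v‖) ≤ ‖imageChord v a x y‖ := by
  have h := sqrt_mul_dist_le_dist_homothety (c := unitSphereImageCenter v)
    (P := invertAbout v x) (Q := invertAbout v y) (by
      rw [dist_eq_norm, dist_eq_norm, norm_invertAbout_sub_unitSphereImageCenter hv hx,
        norm_invertAbout_sub_unitSphereImageCenter hv hy]) ha
  rwa [dist_eq_norm, dist_eq_norm, norm_invertAbout_sub_invertAbout
    (ne_of_norm_lt_of_norm_eq_one hv hx) (ne_of_norm_lt_of_norm_eq_one hv hy),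
    ← mul_div_assoc] at h

theorem le_norm_imageChord_of_le_norm_sub (hv : ‖v‖ < 1) (hx : ‖x‖ = 1) (hy : ‖y‖ = 1)
    (ha : 0 ≤ a) (hsep : α ≤ ‖x - y‖) :
    α * √a / (‖x - v‖ * ‖y - v‖) ≤ ‖imageChord v a x y‖ := by
  refine le_trans ?_ (sqrt_mul_norm_sub_div_le_norm_imageChord hv hx hy ha)
  have := norm_sub_pos_of_norm_lt_of_norm_eq_one hv hx
  have := norm_sub_pos_of_norm_lt_of_norm_eq_one hv hy
  rw [mul_comm α]
  gcongr

theorem norm_gaussMap_sub_gaussMap_left_le {x₀ : E} (hv : ‖v‖ < 1) (hx : ‖x‖ = 1)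
    (hx₀ : ‖x₀‖ = 1) (hy : ‖y‖ = 1) (ha : 0 < a) (hα : 0 < α) (hsep : α ≤ ‖x - y‖) :
    ‖gaussMap v a x y - gaussMap v a x₀ y‖ ≤ 2 * ‖y - v‖ / (α * √a * ‖x₀ - v‖) * ‖x - x₀‖ := by
  have hxv := norm_sub_pos_of_norm_lt_of_norm_eq_one hv hx
  have hx₀v := norm_sub_pos_of_norm_lt_of_norm_eq_one hv hx₀
  have hyv := norm_sub_pos_of_norm_lt_of_norm_eq_one hv hy
  have hchord : ‖imageChord v a x y - imageChord v a x₀ y‖ = ‖x - x₀‖ / (‖x - v‖ * ‖x₀ - v‖) := by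
    rw [imageChord, imageChord, sub_sub_sub_cancel_right,
      norm_invertAbout_sub_invertAbout (ne_of_norm_lt_of_norm_eq_one hv hx)
        (ne_of_norm_lt_of_norm_eq_one hv hx₀)]
  calc ‖gaussMap v a x y - gaussMap v a x₀ y‖
      ≤ 2 * ‖imageChord v a x y - imageChord v a x₀ y‖ / (α * √a / (‖x - v‖ * ‖y - v‖)) :=
        norm_normalize_sub_normalize_le_of_le _ (by positivity)
          (le_norm_imageChord_of_le_norm_sub hv hx hy ha.le hsep)
    _ = 2 * ‖y - v‖ / (α * √a * ‖x₀ - v‖) * ‖x - x₀‖ := by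
        rw [hchord]; field_simp

theorem norm_gaussMap_sub_gaussMap_right_le {y₀ : E} (hv : ‖v‖ < 1) (hx : ‖x‖ = 1)
    (hy : ‖y‖ = 1) (hy₀ : ‖y₀‖ = 1) (ha : 0 < a) (hα : 0 < α) (hsep : α ≤ ‖x - y‖) :
    ‖gaussMap v a x y - gaussMap v a x y₀‖ ≤ 2 * √a * ‖x - v‖ / (α * ‖y₀ - v‖) * ‖y - y₀‖ := by
  have hxv := norm_sub_pos_of_norm_lt_of_norm_eq_one hv hx
  have hyv := norm_sub_pos_of_norm_lt_of_norm_eq_one hv hy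
  have hy₀v := norm_sub_pos_of_norm_lt_of_norm_eq_one hv hy₀
  have hchord : ‖imageChord v a x y - imageChord v a x y₀‖
      = a * (‖y - y₀‖ / (‖y - v‖ * ‖y₀ - v‖)) := by
    rw [imageChord, imageChord, sub_sub_sub_cancel_left, homothety_sub_homothety, norm_smul,
      Real.norm_eq_abs, abs_of_pos ha, norm_sub_rev,
      norm_invertAbout_sub_invertAbout (ne_of_norm_lt_of_norm_eq_one hv hy)
        (ne_of_norm_lt_of_norm_eq_one hv hy₀)]
  calc ‖gaussMap v a x y - gaussMap v a x y₀‖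
      ≤ 2 * ‖imageChord v a x y - imageChord v a x y₀‖ / (α * √a / (‖x - v‖ * ‖y - v‖)) :=
        norm_normalize_sub_normalize_le_of_le _ (by positivity)
          (le_norm_imageChord_of_le_norm_sub hv hx hy ha.le hsep)
    _ = 2 * √a * ‖x - v‖ / (α * ‖y₀ - v‖) * ‖y - y₀‖ := by
        rw [hchord]; field_simp; rw [sq_sqrt ha.le, mul_comm]

theorem norm_deriv_gaussMap_left_le {γ : ℝ → E} {K : NNReal} (hγ : LipschitzWith K γ)
    (hS : ∀ s, ‖γ s‖ = 1) (hv : ‖v‖ < 1) (hy : ‖y‖ = 1) (ha : 0 < a) (hα : 0 < α)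
    (hsep : ∀ s, α ≤ ‖γ s - y‖) (s₀ : ℝ) :
    ‖deriv (fun s => gaussMap v a (γ s) y) s₀‖ ≤ 2 * K * ‖y - v‖ / (α * √a * ‖γ s₀ - v‖) := by
  refine norm_deriv_le_of_lip' (by positivity) (Filter.Eventually.of_forall fun s => ?_)
  calc ‖gaussMap v a (γ s) y - gaussMap v a (γ s₀) y‖
      ≤ 2 * ‖y - v‖ / (α * √a * ‖γ s₀ - v‖) * ‖γ s - γ s₀‖ :=
        norm_gaussMap_sub_gaussMap_left_le hv (hS s) (hS s₀) hy ha hα (hsep s)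
    _ ≤ 2 * ‖y - v‖ / (α * √a * ‖γ s₀ - v‖) * (K * ‖s - s₀‖) := by
        gcongr; exact hγ.norm_sub_le s s₀
    _ = 2 * K * ‖y - v‖ / (α * √a * ‖γ s₀ - v‖) * ‖s - s₀‖ := by ring

theorem norm_deriv_gaussMap_right_le {γ : ℝ → E} {K : NNReal} (hγ : LipschitzWith K γ)
    (hS : ∀ t, ‖γ t‖ = 1) (hv : ‖v‖ < 1) (hx : ‖x‖ = 1) (ha : 0 < a) (hα : 0 < α)
    (hsep : ∀ t, α ≤ ‖x - γ t‖) (t₀ : ℝ) :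
    ‖deriv (fun t => gaussMap v a x (γ t)) t₀‖ ≤ 2 * K * √a * ‖x - v‖ / (α * ‖γ t₀ - v‖) := by
  refine norm_deriv_le_of_lip' (by positivity) (Filter.Eventually.of_forall fun t => ?_)
  calc ‖gaussMap v a x (γ t) - gaussMap v a x (γ t₀)‖
      ≤ 2 * √a * ‖x - v‖ / (α * ‖γ t₀ - v‖) * ‖γ t - γ t₀‖ :=
        norm_gaussMap_sub_gaussMap_right_le hv hx (hS t) (hS t₀) ha hα (hsep t)
    _ ≤ 2 * √a * ‖x - v‖ / (α * ‖γ t₀ - v‖) * (K * ‖t - t₀‖) := by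
        gcongr; exact hγ.norm_sub_le t t₀
    _ = 2 * K * √a * ‖x - v‖ / (α * ‖γ t₀ - v‖) * ‖t - t₀‖ := by ring

end

/-- Uniform Jacobian bound: there is `C > 0` such that for all `v ∈ B⁴`, `z ∈ (0,1)` and
almost all `(s,t)`, the Jacobian of the canonical family Gauss map `g_{(v,z)}` is at most `C`. -/
theorem canonical_family_uniform_jacobian_bound
    (γ₁ γ₂ : ℝ → EuclideanSpace ℝ (Fin 4)) (K₁ K₂ : NNReal)
    (h₁ : LipschitzWith K₁ γ₁) (h₂ : LipschitzWith K₂ γ₂)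
    (hS₁ : ∀ s, ‖γ₁ s‖ = 1) (hS₂ : ∀ t, ‖γ₂ t‖ = 1)
    (α : ℝ) (hα : 0 < α) (hsep : ∀ s t, α ≤ ‖γ₁ s - γ₂ t‖)
    (g : EuclideanSpace ℝ (Fin 4) → ℝ → ℝ × ℝ → EuclideanSpace ℝ (Fin 4))
    (hg : ∀ v z p, g v z p =
      ‖(‖γ₁ p.1 - v‖ ^ 2)⁻¹ • (γ₁ p.1 - v)
          - ((1 + (1 - ‖v‖ ^ 2) * (2 * z - 1) / ((1 - ‖v‖ ^ 2 + z) * (1 - z))) •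
              ((‖γ₂ p.2 - v‖ ^ 2)⁻¹ • (γ₂ p.2 - v) - (1 - ‖v‖ ^ 2)⁻¹ • v)
            + (1 - ‖v‖ ^ 2)⁻¹ • v)‖⁻¹ •
        ((‖γ₁ p.1 - v‖ ^ 2)⁻¹ • (γ₁ p.1 - v)
          - ((1 + (1 - ‖v‖ ^ 2) * (2 * z - 1) / ((1 - ‖v‖ ^ 2 + z) * (1 - z))) •
              ((‖γ₂ p.2 - v‖ ^ 2)⁻¹ • (γ₂ p.2 - v) - (1 - ‖v‖ ^ 2)⁻¹ • v)
            + (1 - ‖v‖ ^ 2)⁻¹ • v))) :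
    ∃ C : ℝ, 0 < C ∧ ∀ v : EuclideanSpace ℝ (Fin 4), ‖v‖ < 1 →
      ∀ z ∈ Set.Ioo (0:ℝ) 1, ∀ᵐ p : ℝ × ℝ,
        Real.sqrt (‖deriv (fun s => g v z (s, p.2)) p.1‖ ^ 2
              * ‖deriv (fun t => g v z (p.1, t)) p.2‖ ^ 2
            - ⟪deriv (fun s => g v z (s, p.2)) p.1, deriv (fun t => g v z (p.1, t)) p.2⟫ ^ 2)
          ≤ C := by
  refine ⟨4 * (K₁ + 1) * (K₂ + 1) / α ^ 2, by positivity, fun v hv z hz => ?_⟩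
  refine Filter.Eventually.of_forall fun ⟨s, t⟩ => ?_
  have hg' : ∀ p, g v z p = gaussMap v (dilationFactor v z) (γ₁ p.1) (γ₂ p.2) := fun p => by
    rw [hg]; rfl
  simp only [hg']
  set a := dilationFactor v z
  have ha : 0 < a := dilationFactor_pos hv hz
  have hxv := norm_sub_pos_of_norm_lt_of_norm_eq_one hv (hS₁ s)
  have hyv := norm_sub_pos_of_norm_lt_of_norm_eq_one hv (hS₂ t)
  calc _ ≤ ‖deriv (fun s => gaussMap v a (γ₁ s) (γ₂ t)) s‖
          * ‖deriv (fun t => gaussMap v a (γ₁ s) (γ₂ t)) t‖ :=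
        sqrt_norm_sq_mul_norm_sq_sub_inner_sq_le _ _
    _ ≤ (2 * K₁ * ‖γ₂ t - v‖ / (α * √a * ‖γ₁ s - v‖))
          * (2 * K₂ * √a * ‖γ₁ s - v‖ / (α * ‖γ₂ t - v‖)) :=
        mul_le_mul
          (norm_deriv_gaussMap_left_le h₁ hS₁ hv (hS₂ t) ha hα (fun s' => hsep s' t) s)
          (norm_deriv_gaussMap_right_le h₂ hS₂ hv (hS₁ s) ha hα (hsep s) t)
          (norm_nonneg _) (by positivity)
    _ = 4 * K₁ * K₂ / α ^ 2 := by field_simp; ring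
    _ ≤ 4 * (K₁ + 1) * (K₂ + 1) / α ^ 2 := by gcongr <;> linarith
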